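/- arXiv:2603.22807 — 2 statements merged into one kernel-verified Lean document; each statement's English description precedes it below -/
import Mathlib

section
/- (Equivalent form of Theorem B.) The second moment of the tilted Wigner semicircle is strictly increasing in the tilt on the nonnegative half-line: for all real numbers λ₁, λ₂ with 0 ≤ λ₁ < λ₂, one has E_{λ₁}[x²] < E_{λ₂}[x²]. -/
open intervalIntegral

/-- The exponentially tilted Wigner semicircle weight on `[-1,1]`. -/
noncomputable def tiltW (lam x : ℝ) : ℝ := Real.sqrt (1 - x ^ 2) * Real.exp (lam * x)

/-- The normalization constant `Z(λ)`. -/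
noncomputable def tiltZ (lam : ℝ) : ℝ := ∫ x in (-1 : ℝ)..1, tiltW lam x

/-- The mean `E_λ[f]` under the tilted semicircle measure. -/
noncomputable def tiltE (lam : ℝ) (f : ℝ → ℝ) : ℝ :=
  (tiltZ lam)⁻¹ * ∫ x in (-1 : ℝ)..1, f x * tiltW lam x

/-- The covariance `Cov_λ(f, g)` under the tilted semicircle measure. -/
noncomputable def tiltCov (lam : ℝ) (f g : ℝ → ℝ) : ℝ :=
  tiltE lam (fun x => f x * g x) - tiltE lam f * tiltE lam g

/-!
Writing `Z_λ` and `M_λ` for the integrals of `w_λ` and `x² w_λ` over `[-1, 1]`, the claim is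
`M₁ Z₂ < M₂ Z₁`, and `Z₁ M₂ - M₁ Z₂ = ∫∫ (y² - x²) w₁(x) w₂(y) dx dy`. Since the tilt by `-λ`
is the reflection of the tilt by `λ`, antisymmetrizing this integrand in `(λ₁, λ₂)` and
symmetrizing it under `λ ↦ -λ` gives a kernel with four times the same double integral. With
`σ = (λ₁ + λ₂)/2` and `δ = (λ₂ - λ₁)/2` that kernel factors as
`4 · (x + y) sinh (σ (x + y)) · (x - y) sinh (δ (x - y)) · √(1 - x²) √(1 - y²)`,
which is nonnegative when `|λ₁| ≤ λ₂` and positive at `(1/2, 0)` when `|λ₁| < λ₂`.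
-/

open Real Set

theorem mul_sinh_mul_nonneg {c : ℝ} (hc : 0 ≤ c) (t : ℝ) : 0 ≤ t * sinh (c * t) := by
  rcases le_total 0 t with ht | ht
  · exact mul_nonneg ht (sinh_nonneg_iff.2 (mul_nonneg hc ht))
  · exact mul_nonneg_of_nonpos_of_nonpos ht
      (sinh_nonpos_iff.2 (mul_nonpos_of_nonneg_of_nonpos hc ht))

theorem mul_sinh_mul_pos {c t : ℝ} (hc : 0 < c) (ht : 0 < t) : 0 < t * sinh (c * t) :=
  mul_pos ht (sinh_pos_iff.2 (mul_pos hc ht))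

section IteratedIntegral

variable {a b : ℝ}

theorem integral_integral_add {F G : ℝ → ℝ → ℝ} (hF : Continuous (Function.uncurry F))
    (hG : Continuous (Function.uncurry G)) :
    ∫ y in a..b, ∫ x in a..b, (F x y + G x y) =
      (∫ y in a..b, ∫ x in a..b, F x y) + ∫ y in a..b, ∫ x in a..b, G x y := by
  have hF' (y : ℝ) : Continuous (F · y) := hF.comp₂ continuous_id continuous_const
  have hG' (y : ℝ) : Continuous (G · y) := hG.comp₂ continuous_id continuous_const
  simp_rw [intervalIntegral.integral_add ((hF' _).intervalIntegrable a b)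
    ((hG' _).intervalIntegrable a b)]
  exact intervalIntegral.integral_add (Continuous.intervalIntegrable (by fun_prop) a b)
    (Continuous.intervalIntegrable (by fun_prop) a b)

theorem integral_integral_sub {F G : ℝ → ℝ → ℝ} (hF : Continuous (Function.uncurry F))
    (hG : Continuous (Function.uncurry G)) :
    ∫ y in a..b, ∫ x in a..b, (F x y - G x y) =
      (∫ y in a..b, ∫ x in a..b, F x y) - ∫ y in a..b, ∫ x in a..b, G x y := by
  have hF' (y : ℝ) : Continuous (F · y) := hF.comp₂ continuous_id continuous_const
  have hG' (y : ℝ) : Continuous (G · y) := hG.comp₂ continuous_id continuous_const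
  simp_rw [intervalIntegral.integral_sub ((hF' _).intervalIntegrable a b)
    ((hG' _).intervalIntegrable a b)]
  exact intervalIntegral.integral_sub (Continuous.intervalIntegrable (by fun_prop) a b)
    (Continuous.intervalIntegrable (by fun_prop) a b)

theorem integral_integral_sq_sub_sq_mul_mul {f g : ℝ → ℝ} (hf : Continuous f)
    (hg : Continuous g) :
    ∫ y in a..b, ∫ x in a..b, (y ^ 2 - x ^ 2) * (f x * g y) =
      (∫ x in a..b, f x) * (∫ y in a..b, y ^ 2 * g y) -
        (∫ x in a..b, x ^ 2 * f x) * ∫ y in a..b, g y := by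
  have inner (y : ℝ) : ∫ x in a..b, (y ^ 2 - x ^ 2) * (f x * g y) =
      (∫ x in a..b, f x) * (y ^ 2 * g y) - (∫ x in a..b, x ^ 2 * f x) * g y := by
    have h (x : ℝ) : (y ^ 2 - x ^ 2) * (f x * g y) = y ^ 2 * g y * f x - g y * (x ^ 2 * f x) := by
      ring
    simp_rw [h]
    rw [intervalIntegral.integral_sub (Continuous.intervalIntegrable (by fun_prop) a b)
        (Continuous.intervalIntegrable (by fun_prop) a b),
      intervalIntegral.integral_const_mul, intervalIntegral.integral_const_mul]
    ring
  simp_rw [inner]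
  rw [intervalIntegral.integral_sub (Continuous.intervalIntegrable (by fun_prop) a b)
      (Continuous.intervalIntegrable (by fun_prop) a b),
    intervalIntegral.integral_const_mul, intervalIntegral.integral_const_mul]

theorem integral_integral_pos {F : ℝ → ℝ → ℝ} (hab : a < b) (hF : Continuous (Function.uncurry F))
    (hF_nonneg : ∀ x ∈ Icc a b, ∀ y ∈ Icc a b, 0 ≤ F x y) {x₀ y₀ : ℝ} (hx₀ : x₀ ∈ Icc a b)
    (hy₀ : y₀ ∈ Icc a b) (hF_pos : 0 < F x₀ y₀) :
    0 < ∫ y in a..b, ∫ x in a..b, F x y := by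
  refine intervalIntegral.integral_pos hab (Continuous.continuousOn (by fun_prop))
    (fun y hy => ?_) ⟨y₀, hy₀, ?_⟩
  · exact intervalIntegral.integral_nonneg hab.le
      fun x hx => hF_nonneg x hx y (Ioc_subset_Icc_self hy)
  · exact intervalIntegral.integral_pos hab (hF.comp₂ continuous_id continuous_const).continuousOn
      (fun x hx => hF_nonneg x (Ioc_subset_Icc_self hx) y₀ hy₀) ⟨x₀, hx₀, hF_pos⟩

end IteratedIntegral

@[fun_prop]
theorem continuous_tiltW (lam : ℝ) : Continuous (tiltW lam) := by
  unfold tiltW; fun_prop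

theorem tiltW_neg (lam x : ℝ) : tiltW lam (-x) = tiltW (-lam) x := by
  simp [tiltW]

theorem tiltZ_pos (lam : ℝ) : 0 < tiltZ lam := by
  refine intervalIntegral_pos_of_pos_on ((continuous_tiltW lam).intervalIntegrable _ _)
    (fun x hx => mul_pos (sqrt_pos.2 ?_) (exp_pos _)) (by norm_num)
  nlinarith [hx.1, hx.2]

theorem tiltZ_neg (lam : ℝ) : tiltZ (-lam) = tiltZ lam := by
  simp_rw [tiltZ, ← tiltW_neg, intervalIntegral.integral_comp_neg, neg_neg]

noncomputable def tiltM2 (lam : ℝ) : ℝ := ∫ x in (-1 : ℝ)..1, x ^ 2 * tiltW lam x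

theorem tiltM2_neg (lam : ℝ) : tiltM2 (-lam) = tiltM2 lam := by
  have h := intervalIntegral.integral_comp_neg (a := -1) (b := 1) fun x => x ^ 2 * tiltW lam x
  simp_rw [neg_sq, tiltW_neg, neg_neg] at h
  exact h

noncomputable def tiltKernel (l₁ l₂ x y : ℝ) : ℝ :=
  (y ^ 2 - x ^ 2) * (tiltW l₁ x * tiltW l₂ y - tiltW l₂ x * tiltW l₁ y +
    (tiltW (-l₁) x * tiltW (-l₂) y - tiltW (-l₂) x * tiltW (-l₁) y))

theorem continuous_tiltKernel (l₁ l₂ : ℝ) : Continuous (Function.uncurry (tiltKernel l₁ l₂)) := by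
  unfold tiltKernel; fun_prop

theorem tiltKernel_eq (l₁ l₂ x y : ℝ) :
    tiltKernel l₁ l₂ x y =
      4 * ((x + y) * sinh ((l₁ + l₂) / 2 * (x + y))) * ((x - y) * sinh ((l₂ - l₁) / 2 * (x - y))) *
        (√(1 - x ^ 2) * √(1 - y ^ 2)) := by
  have hsinh : 2 * sinh ((l₁ + l₂) / 2 * (x + y)) * sinh ((l₂ - l₁) / 2 * (x - y)) =
      cosh (l₂ * x + l₁ * y) - cosh (l₁ * x + l₂ * y) := by
    rw [show l₂ * x + l₁ * y = (l₁ + l₂) / 2 * (x + y) + (l₂ - l₁) / 2 * (x - y) by ring,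
      show l₁ * x + l₂ * y = (l₁ + l₂) / 2 * (x + y) - (l₂ - l₁) / 2 * (x - y) by ring,
      cosh_add, cosh_sub]
    ring
  have hcosh (c d : ℝ) : 2 * cosh (c * x + d * y) =
      exp (c * x) * exp (d * y) + exp (-c * x) * exp (-d * y) := by
    rw [cosh_eq, ← exp_add, ← exp_add]
    ring_nf
  simp only [tiltKernel, tiltW]
  linear_combination (y ^ 2 - x ^ 2) * (√(1 - x ^ 2) * √(1 - y ^ 2)) *
    (hcosh l₂ l₁ - hcosh l₁ l₂ + 2 * hsinh)

theorem integral_integral_tiltKernel (l₁ l₂ : ℝ) :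
    ∫ y in (-1 : ℝ)..1, ∫ x in (-1 : ℝ)..1, tiltKernel l₁ l₂ x y =
      4 * (tiltZ l₁ * tiltM2 l₂ - tiltM2 l₁ * tiltZ l₂) := by
  simp only [tiltKernel, mul_add, mul_sub]
  rw [integral_integral_add (by fun_prop) (by fun_prop),
    integral_integral_sub (by fun_prop) (by fun_prop),
    integral_integral_sub (by fun_prop) (by fun_prop)]
  simp only [integral_integral_sq_sub_sq_mul_mul (continuous_tiltW _) (continuous_tiltW _),
    ← tiltZ.eq_1, ← tiltM2.eq_1, tiltZ_neg, tiltM2_neg]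
  ring

theorem tiltKernel_nonneg {l₁ l₂ : ℝ} (h : |l₁| ≤ l₂) (x y : ℝ) : 0 ≤ tiltKernel l₁ l₂ x y := by
  have hsum : 0 ≤ (l₁ + l₂) / 2 := by linarith [neg_abs_le l₁]
  have hdiff : 0 ≤ (l₂ - l₁) / 2 := by linarith [le_abs_self l₁]
  rw [tiltKernel_eq]
  exact mul_nonneg (mul_nonneg (mul_nonneg zero_le_four (mul_sinh_mul_nonneg hsum _))
    (mul_sinh_mul_nonneg hdiff _)) (by positivity)

theorem tiltKernel_half_zero_pos {l₁ l₂ : ℝ} (h : |l₁| < l₂) : 0 < tiltKernel l₁ l₂ (1 / 2) 0 := by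
  have hsum : 0 < (l₁ + l₂) / 2 := by linarith [neg_abs_le l₁]
  have hdiff : 0 < (l₂ - l₁) / 2 := by linarith [le_abs_self l₁]
  rw [tiltKernel_eq]
  exact mul_pos (mul_pos (mul_pos four_pos (mul_sinh_mul_pos hsum (by norm_num)))
    (mul_sinh_mul_pos hdiff (by norm_num))) (by norm_num)

theorem tiltM2_mul_tiltZ_lt {l₁ l₂ : ℝ} (h : |l₁| < l₂) :
    tiltM2 l₁ * tiltZ l₂ < tiltM2 l₂ * tiltZ l₁ := by
  have hpos : 0 < ∫ y in (-1 : ℝ)..1, ∫ x in (-1 : ℝ)..1, tiltKernel l₁ l₂ x y :=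
    integral_integral_pos (by norm_num) (continuous_tiltKernel l₁ l₂)
      (fun x _ y _ => tiltKernel_nonneg h.le x y) (by norm_num) (by norm_num)
      (tiltKernel_half_zero_pos h)
  rw [integral_integral_tiltKernel] at hpos
  linarith

/-- Equivalent form of Theorem B: the second moment of the tilted Wigner
semicircle is strictly increasing in the tilt on the nonnegative half-line. -/
theorem tiltE_xsq_strictMono (lam₁ lam₂ : ℝ) (h₁ : 0 ≤ lam₁) (h₂ : lam₁ < lam₂) :
    tiltE lam₁ (fun x => x ^ 2) < tiltE lam₂ (fun x => x ^ 2) := by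
  change (tiltZ lam₁)⁻¹ * tiltM2 lam₁ < (tiltZ lam₂)⁻¹ * tiltM2 lam₂
  rw [inv_mul_eq_div, inv_mul_eq_div, div_lt_div_iff₀ (tiltZ_pos lam₁) (tiltZ_pos lam₂)]
  exact tiltM2_mul_tiltZ_lt (by rwa [abs_of_nonneg h₁])
end

section
/- (Barrier step, Step 4(b) of the proof of Theorem B.) Define R(z) = B₀(z)/(z·B₁(z)) and the barrier function φ(z) = z²·(R(z)² − 1) − 4 for z > 0. If z₀ > 0 satisfies φ(z₀) = 0, then φ is differentiable at z₀ with HasDerivAt φ (2·z₀·(Real.sqrt(1 + 4/z₀²) − 2/z₀)²) z₀; in particular the derivative of φ at any zero z₀ > 0 is strictly positive. -/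
open intervalIntegral

/-- `B₀(z) = ∫_{−1}^{1} e^{zt} (1 − t²)^{−1/2} dt`, so that `I₀(z) = B₀(z)/π`. -/
noncomputable def B0 (z : ℝ) : ℝ :=
  ∫ t in (-1 : ℝ)..1, Real.exp (z * t) * (1 - t ^ 2) ^ (-(1 / 2) : ℝ)

/-- `B₁(z) = ∫_{−1}^{1} e^{zt} √(1 − t²) dt`, so that `I₁(z) = z·B₁(z)/π`. -/
noncomputable def B1 (z : ℝ) : ℝ :=
  ∫ t in (-1 : ℝ)..1, Real.exp (z * t) * Real.sqrt (1 - t ^ 2)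

/-- The Bessel ratio `R(z) = B₀(z)/(z·B₁(z)) = I₀(z)/I₁(z)`. -/
noncomputable def Rb (z : ℝ) : ℝ := B0 z / (z * B1 z)

/-- The barrier function `φ(z) = z²·(R(z)² − 1) − 4`. -/
noncomputable def phiB (z : ℝ) : ℝ := z ^ 2 * ((Rb z) ^ 2 - 1) - 4

/-!
Integrating by parts against the weights `(1 - t²)^{∓1/2}` gives `B₀' = z B₁` and
`(z B₁)' = B₀ - B₁`, so `R = B₀ / (z B₁)` solves the Riccati equation `R' = 1 - R² + R / z`.
At a zero of `φ` we have `(z R)² = z² + 4`; substituting this into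
`φ' = 2z (R² - 1) + 2z² R R'` leaves `2z (R - 2/z)²`, which is positive because
`R² = 1 + 4/z² ≠ 4/z²`.
-/

open MeasureTheory Set

lemma abs_le_max_abs_abs_of_mem_uIcc {a b t : ℝ} (ht : t ∈ uIcc a b) : |t| ≤ max |a| |b| := by
  rcases mem_uIcc.1 ht with h | h
  · exact abs_le_max_abs_abs h.1 h.2
  · rw [max_comm]; exact abs_le_max_abs_abs h.1 h.2

theorem hasDerivAt_integral_exp_mul {w : ℝ → ℝ} {a b : ℝ} (hw : IntervalIntegrable w volume a b)
    (z : ℝ) :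
    HasDerivAt (fun x => ∫ t in a..b, Real.exp (x * t) * w t)
      (∫ t in a..b, t * Real.exp (z * t) * w t) z := by
  set C := max |a| |b|
  have hint : ∀ x : ℝ, IntervalIntegrable (fun t => Real.exp (x * t) * w t) volume a b :=
    fun x => hw.continuousOn_mul (by fun_prop)
  have hint' : IntervalIntegrable (fun t => t * Real.exp (z * t) * w t) volume a b :=
    hw.continuousOn_mul (g := fun t => t * Real.exp (z * t)) (by fun_prop)
  refine (hasDerivAt_integral_of_dominated_loc_of_deriv_le (s := Metric.ball z 1)
    (F' := fun x t => t * Real.exp (x * t) * w t)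
    (bound := fun t => C * Real.exp ((|z| + 1) * C) * |w t|) (Metric.ball_mem_nhds z one_pos)
    (.of_forall fun x => (hint x).def'.aestronglyMeasurable) (hint z)
    hint'.def'.aestronglyMeasurable (.of_forall fun t ht x hx => ?_) (hw.abs.const_mul _)
    (.of_forall fun t _ x _ => ?_)).2
  · have htC : |t| ≤ C := abs_le_max_abs_abs_of_mem_uIcc (uIoc_subset_uIcc ht)
    have hxz : |x| ≤ |z| + 1 := by
      have := mem_ball_iff_norm.1 hx
      rw [Real.norm_eq_abs] at this
      linarith [abs_sub_abs_le_abs_sub x z]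
    have hexp : Real.exp (x * t) ≤ Real.exp ((|z| + 1) * C) := by
      refine Real.exp_le_exp.2 ?_
      calc x * t ≤ |x| * |t| := by rw [← abs_mul]; exact le_abs_self _
        _ ≤ (|z| + 1) * C := by gcongr
    rw [norm_mul, norm_mul, Real.norm_eq_abs, Real.norm_eq_abs, Real.norm_eq_abs,
      abs_of_pos (Real.exp_pos _)]
    gcongr
  · simpa [mul_comm, mul_assoc] using ((hasDerivAt_mul_const t).exp).mul_const (w t)

lemma rpow_neg_half_eq_inv_sqrt (x : ℝ) : x ^ (-(1 / 2) : ℝ) = (√x)⁻¹ := by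
  rcases le_or_gt 0 x with hx | hx
  · rw [Real.rpow_neg hx, Real.sqrt_eq_rpow]
  · rw [Real.rpow_def_of_neg hx, Real.sqrt_eq_zero_of_nonpos hx.le, inv_zero, mul_comm]
    simpa [div_eq_inv_mul] using Real.cos_pi_div_two

lemma intervalIntegrable_inv_sqrt_one_sub_sq :
    IntervalIntegrable (fun t => (√(1 - t ^ 2))⁻¹) volume (-1) 1 := by
  rw [intervalIntegrable_iff_integrableOn_Ioc_of_le (by norm_num)]
  refine integrableOn_deriv_of_nonneg Real.continuous_arcsin.continuousOn
    (fun t ht => ?_) (fun t _ => by positivity)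
  simpa [one_div] using Real.hasDerivAt_arcsin ht.1.ne' ht.2.ne

lemma B0_eq_integral_inv_sqrt :
    B0 = fun z => ∫ t in (-1 : ℝ)..1, Real.exp (z * t) * (√(1 - t ^ 2))⁻¹ := by
  funext z
  simp only [B0, rpow_neg_half_eq_inv_sqrt]

lemma one_sub_sq_pos_of_mem_Ioo {t : ℝ} (ht : t ∈ Ioo (-1 : ℝ) 1) : 0 < 1 - t ^ 2 := by
  nlinarith [ht.1, ht.2]

lemma B0_pos (z : ℝ) : 0 < B0 z := by
  rw [B0_eq_integral_inv_sqrt]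
  refine intervalIntegral_pos_of_pos_on
    (intervalIntegrable_inv_sqrt_one_sub_sq.continuousOn_mul (by fun_prop)) (fun t ht => ?_)
    (by norm_num)
  have := Real.sqrt_pos.2 (one_sub_sq_pos_of_mem_Ioo ht)
  positivity

lemma B1_pos (z : ℝ) : 0 < B1 z := by
  refine intervalIntegral_pos_of_pos_on (Continuous.intervalIntegrable (by fun_prop) _ _)
    (fun t ht => ?_) (by norm_num)
  have := Real.sqrt_pos.2 (one_sub_sq_pos_of_mem_Ioo ht)
  positivity

lemma hasDerivAt_sqrt_one_sub_sq {t : ℝ} (ht : t ∈ Ioo (-1 : ℝ) 1) :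
    HasDerivAt (fun t => √(1 - t ^ 2)) (-t * (√(1 - t ^ 2))⁻¹) t := by
  have h := one_sub_sq_pos_of_mem_Ioo ht
  refine ((hasDerivAt_pow 2 t).const_sub 1).sqrt h.ne' |>.congr_deriv ?_
  have := Real.sqrt_pos.2 h
  field_simp
  ring

-- Both identities integrate an exact derivative that vanishes at `±1` because `√(1 - t²)` does.
lemma integral_mul_exp_mul_inv_sqrt (z : ℝ) :
    ∫ t in (-1 : ℝ)..1, t * Real.exp (z * t) * (√(1 - t ^ 2))⁻¹ = z * B1 z := by
  have hB1 : IntervalIntegrable (fun t => z * (Real.exp (z * t) * √(1 - t ^ 2))) volume (-1) 1 :=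
    Continuous.intervalIntegrable (by fun_prop) _ _
  have hB0' : IntervalIntegrable (fun t => t * Real.exp (z * t) * (√(1 - t ^ 2))⁻¹)
      volume (-1) 1 :=
    intervalIntegrable_inv_sqrt_one_sub_sq.continuousOn_mul (g := fun t => t * Real.exp (z * t))
      (by fun_prop)
  have hFTC : ∫ t in (-1 : ℝ)..1, (z * (Real.exp (z * t) * √(1 - t ^ 2))
      - t * Real.exp (z * t) * (√(1 - t ^ 2))⁻¹) = 0 := by
    rw [integral_eq_sub_of_hasDerivAt_of_le (f := fun t => Real.exp (z * t) * √(1 - t ^ 2))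
      (by norm_num) (by fun_prop) (fun t ht => ?_) (hB1.sub hB0')]
    · norm_num
    · refine (((hasDerivAt_const_mul z).exp.mul (hasDerivAt_sqrt_one_sub_sq ht))).congr_deriv ?_
      ring
  rw [integral_sub hB1 hB0', intervalIntegral.integral_const_mul] at hFTC
  rw [B1]
  linarith

lemma mul_integral_mul_exp_mul_sqrt (z : ℝ) :
    z * ∫ t in (-1 : ℝ)..1, t * Real.exp (z * t) * √(1 - t ^ 2) = B0 z - 2 * B1 z := by
  have hB1 : IntervalIntegrable (fun t => 2 * (Real.exp (z * t) * √(1 - t ^ 2))) volume (-1) 1 :=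
    Continuous.intervalIntegrable (by fun_prop) _ _
  have hB1' : IntervalIntegrable (fun t => z * (t * Real.exp (z * t) * √(1 - t ^ 2)))
      volume (-1) 1 :=
    Continuous.intervalIntegrable (by fun_prop) _ _
  have hB0 : IntervalIntegrable (fun t => Real.exp (z * t) * (√(1 - t ^ 2))⁻¹) volume (-1) 1 :=
    intervalIntegrable_inv_sqrt_one_sub_sq.continuousOn_mul (by fun_prop)
  have hFTC : ∫ t in (-1 : ℝ)..1, (2 * (Real.exp (z * t) * √(1 - t ^ 2))
      + z * (t * Real.exp (z * t) * √(1 - t ^ 2)) - Real.exp (z * t) * (√(1 - t ^ 2))⁻¹) = 0 := by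
    rw [integral_eq_sub_of_hasDerivAt_of_le
      (f := fun t => t * Real.exp (z * t) * √(1 - t ^ 2))
      (by norm_num) (by fun_prop) (fun t ht => ?_) ((hB1.add hB1').sub hB0)]
    · norm_num
    · have hsq := Real.sq_sqrt (one_sub_sq_pos_of_mem_Ioo ht).le
      have := Real.sqrt_pos.2 (one_sub_sq_pos_of_mem_Ioo ht)
      refine (((hasDerivAt_id t).mul (hasDerivAt_const_mul z).exp).mul
        (hasDerivAt_sqrt_one_sub_sq ht)).congr_deriv ?_
      simp only [Pi.mul_apply, id_eq]
      field_simp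
      linear_combination -hsq
  rw [integral_sub (hB1.add hB1') hB0, integral_add hB1 hB1', intervalIntegral.integral_const_mul,
    intervalIntegral.integral_const_mul, ← congrFun B0_eq_integral_inv_sqrt z] at hFTC
  rw [B1]
  linarith

lemma hasDerivAt_B0 (z : ℝ) : HasDerivAt B0 (z * B1 z) z := by
  rw [← integral_mul_exp_mul_inv_sqrt, B0_eq_integral_inv_sqrt]
  exact hasDerivAt_integral_exp_mul intervalIntegrable_inv_sqrt_one_sub_sq z

lemma hasDerivAt_mul_B1 (z : ℝ) : HasDerivAt (fun x => x * B1 x) (B0 z - B1 z) z := by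
  have hB1 : HasDerivAt B1 (∫ t in (-1 : ℝ)..1, t * Real.exp (z * t) * √(1 - t ^ 2)) z :=
    hasDerivAt_integral_exp_mul (Continuous.intervalIntegrable (by fun_prop) _ _) z
  refine ((hasDerivAt_id z).mul hB1).congr_deriv ?_
  rw [id_eq]
  linarith [mul_integral_mul_exp_mul_sqrt z]

lemma hasDerivAt_Rb {z : ℝ} (hz : z ≠ 0) : HasDerivAt Rb (1 - Rb z ^ 2 + Rb z / z) z := by
  have hB1 := (B1_pos z).ne'
  refine ((hasDerivAt_B0 z).div (hasDerivAt_mul_B1 z) (mul_ne_zero hz hB1)).congr_deriv ?_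
  rw [Rb]
  field_simp
  ring

lemma hasDerivAt_phiB {z : ℝ} (hz : z ≠ 0) :
    HasDerivAt phiB (2 * z * (Rb z ^ 2 - 1) + 2 * z ^ 2 * Rb z * (1 - Rb z ^ 2 + Rb z / z)) z := by
  refine (((hasDerivAt_pow 2 z).mul (((hasDerivAt_Rb hz).pow 2).sub_const 1)).sub_const 4
    ).congr_deriv ?_
  simp only [Pi.pow_apply]
  push_cast
  ring

lemma Rb_pos {z : ℝ} (hz : 0 < z) : 0 < Rb z :=
  div_pos (B0_pos z) (mul_pos hz (B1_pos z))

lemma mul_Rb_sq_of_phiB_eq_zero {z : ℝ} (h : phiB z = 0) : (z * Rb z) ^ 2 = z ^ 2 + 4 := by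
  rw [phiB] at h
  linear_combination h

/-- Barrier step: at any zero `z₀ > 0` of `φ`, the barrier function is
differentiable with derivative `2·z₀·(√(1 + 4/z₀²) − 2/z₀)²`, which is
strictly positive. -/
theorem hasDerivAt_phiB_at_zero (z₀ : ℝ) (hz₀ : 0 < z₀) (hzero : phiB z₀ = 0) :
    HasDerivAt phiB (2 * z₀ * (Real.sqrt (1 + 4 / z₀ ^ 2) - 2 / z₀) ^ 2) z₀ ∧
      0 < 2 * z₀ * (Real.sqrt (1 + 4 / z₀ ^ 2) - 2 / z₀) ^ 2 := by
  have hR := mul_Rb_sq_of_phiB_eq_zero hzero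
  have hsqrt : Real.sqrt (1 + 4 / z₀ ^ 2) = Rb z₀ := by
    rw [Real.sqrt_eq_iff_eq_sq (by positivity) (Rb_pos hz₀).le]
    field_simp
    linear_combination -hR
  rw [hsqrt]
  constructor
  · refine (hasDerivAt_phiB hz₀.ne').congr_deriv ?_
    field_simp
    linear_combination (1 - z₀ * Rb z₀) * hR
  · have hR_ne : Rb z₀ - 2 / z₀ ≠ 0 := by
      rw [sub_ne_zero, ne_eq, eq_div_iff hz₀.ne', mul_comm]
      intro h
      rw [h] at hR
      nlinarith
    positivity
end
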